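/- Let U be a real Hilbert space, G : U → (−∞,∞] proper, convex and lower semicontinuous and Lipschitz on dom(G) with constant L_G, and F : U → ℝ Fréchet differentiable with ∇F Lipschitz with constant L_{∇F} and F Lipschitz on dom(G) with constant L_F, and assume F + G is bounded from below. For v ∈ dom(G), Δ > 0 set T(v,Δ) := prox_{ΔG}(v − Δ∇F(v)), pred(v,Δ) := ⟨∇F(v), v − T(v,Δ)⟩ + G(v) − G(T(v,Δ)) − (1/(2Δ))‖T(v,Δ) − v‖², ared(v,Δ) := (F+G)(v) − (F+G)(T(v,Δ)), and fix r > 0 with criticality measure C(v) := (1/(2r²))‖v − prox_{rG}(v − r∇F(v))‖². Run the trust-region iteration: given η ∈ (0,1), 0 < γ₁ < 1 ≤ γ₂, 0 < Δ₀ < Δmax ≤ ∞, v₀ ∈ dom(G), while C(v_n) > 0 set v_{n+1} := T(v_n,Δ_n), Δ_{n+1} := min{γ₂Δ_n, Δmax} if ared(v_n,Δ_n) ≥ η·pred(v_n,Δ_n), and v_{n+1} := v_n, Δ_{n+1} := γ₁Δ_n otherwise. Then either the iteration terminates at a stationary point v̄ (i.e., −∇F(v̄) ∈ ∂G(v̄)),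 or it produces an infinite sequence (v_n) such that for EVERY r̂ > 0: ‖v_n − prox_{r̂G}(v_n − r̂∇F(v_n))‖ → 0 as n → ∞. -/

import Mathlib

open Filter
open scoped RealInnerProductSpace ENNReal Topology

/-- The proximal gradient oracle `T(v,Δ) = prox_{ΔG}(v - Δ ∇F(v))`. -/
noncomputable def proxGradOracle {U : Type*} [NormedAddCommGroup U] [InnerProductSpace ℝ U]
    (prox : ℝ → U → U) (gradF : U → U) (Δ : ℝ) (v : U) : U :=
  prox Δ (v - Δ • gradF v)

/-- The predicted reduction `pred(v,Δ) = m_{v,Δ}(v) - m_{v,Δ}(T(v,Δ))`. -/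
noncomputable def proxGradPred {U : Type*} [NormedAddCommGroup U] [InnerProductSpace ℝ U]
    (prox : ℝ → U → U) (G : U → EReal) (gradF : U → U) (Δ : ℝ) (v : U) : ℝ :=
  ⟪gradF v, v - proxGradOracle prox gradF Δ v⟫ +
    (G v).toReal - (G (proxGradOracle prox gradF Δ v)).toReal -
    1 / (2 * Δ) * ‖proxGradOracle prox gradF Δ v - v‖ ^ 2

/-- The actual reduction `ared(v,Δ) = (F+G)(v) - (F+G)(T(v,Δ))`. -/
noncomputable def proxGradAred {U : Type*} [NormedAddCommGroup U] [InnerProductSpace ℝ U]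
    (prox : ℝ → U → U) (F : U → ℝ) (G : U → EReal) (gradF : U → U) (Δ : ℝ) (v : U) : ℝ :=
  (F v + (G v).toReal) -
    (F (proxGradOracle prox gradF Δ v) + (G (proxGradOracle prox gradF Δ v)).toReal)

/-!
The proximal gradient step `T(v, Δ)` minimises the model `⟪∇F v, · - v⟫ + G + ‖· - v‖² / (2Δ)`.
Its variational inequality gives `‖v - T(v, Δ)‖² ≤ 2Δ · pred(v, Δ)`, makes `pred` monotone in `Δ`
and `s ↦ ‖v - T(v, s)‖ / s` nonincreasing. By the descent lemma every step whose radius is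
small compared with `1 / L_{∇F}` succeeds, so the radii stay above some `δ > 0` and infinitely
many steps succeed.
Each success lowers `F + G` by at least `η · pred`, and `F + G` is bounded below, so `pred` tends
to zero along successful steps. The iterates do not move between successes, so the residual with
step `min δ r̂`, and with it the residual with step `r̂`, tends to zero. If instead the criticality
measure vanishes, `v` is a fixed point of the proximal gradient map, i.e. stationary.
-/

theorem le_of_forall_le_add_mul {a b c : ℝ} (h : ∀ t : ℝ, 0 < t → t ≤ 1 → a ≤ b + t * c) :
    a ≤ b := by
  have hlim : Tendsto (fun t : ℝ => b + t * c) (𝓝[>] 0) (𝓝 b) := by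
    have : Continuous fun t : ℝ => b + t * c := by fun_prop
    exact (this.tendsto' 0 b (by simp)).mono_left nhdsWithin_le_nhds
  exact ge_of_tendsto hlim <| eventually_of_mem (Ioc_mem_nhdsGT one_pos) fun t ht => h t ht.1 ht.2

theorem tendsto_zero_of_add_le_of_forall_le {Φ c : ℕ → ℝ} {B : ℝ} (hc : ∀ n, 0 ≤ c n)
    (hΦ : ∀ n, Φ (n + 1) + c n ≤ Φ n) (hB : ∀ n, B ≤ Φ n) : Tendsto c atTop (𝓝 0) := by
  have hsum : ∀ n, ∑ i ∈ Finset.range n, c i ≤ Φ 0 - Φ n := by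
    intro n
    induction n with
    | zero => simp
    | succ n ih => rw [Finset.sum_range_succ]; linarith [hΦ n]
  refine (summable_of_sum_range_le (c := Φ 0 - B) hc fun n => ?_).tendsto_atTop_zero
  linarith [hsum n, hB n]

theorem frequently_of_forall_le_of_eq_mul {Δ : ℕ → ℝ} {p : ℕ → Prop} {γ δ : ℝ} (hγ0 : 0 ≤ γ)
    (hγ1 : γ < 1) (hδ : 0 < δ) (hΔ : ∀ n, δ ≤ Δ n) (hp : ∀ n, ¬ p n → Δ (n + 1) = γ * Δ n) :
    ∃ᶠ n in atTop, p n := by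
  intro hev
  obtain ⟨N, hN⟩ := eventually_atTop.1 hev
  have hgeom : ∀ k, Δ (N + k) = γ ^ k * Δ N := by
    intro k
    induction k with
    | zero => simp
    | succ k ih => rw [← add_assoc, hp _ (hN _ (by omega)), ih, pow_succ]; ring
  have hlim : Tendsto (fun k => Δ (N + k)) atTop (𝓝 0) := by
    simpa [hgeom] using (tendsto_pow_atTop_nhds_zero_of_lt_one hγ0 hγ1).mul_const (Δ N)
  exact hδ.not_ge (ge_of_tendsto hlim (Eventually.of_forall fun k => hΔ (N + k)))

theorem exists_ge_and_eq_of_frequently {α : Type*} {x : ℕ → α} {p : ℕ → Prop}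
    (hp : ∃ᶠ n in atTop, p n) (hx : ∀ n, ¬ p n → x (n + 1) = x n) (n : ℕ) :
    ∃ m, n ≤ m ∧ p m ∧ x m = x n := by
  classical
  have hex : ∃ m, n ≤ m ∧ p m := frequently_atTop.1 hp n
  refine ⟨Nat.find hex, (Nat.find_spec hex).1, (Nat.find_spec hex).2, ?_⟩
  have hconst : ∀ j, n ≤ j → j ≤ Nat.find hex → x j = x n := by
    intro j hj
    induction j, hj using Nat.le_induction with
    | base => exact fun _ => rfl
    | succ j hnj ih =>
      intro hj
      rw [hx j fun hpj => Nat.find_min hex (by omega) ⟨hnj, hpj⟩, ih (by omega)]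
  exact hconst _ (Nat.find_spec hex).1 le_rfl

theorem le_toReal_min_ofReal {a x γ : ℝ} {M : ℝ≥0∞} (ha : 0 ≤ a) (hax : a ≤ x) (hγ : 1 ≤ γ)
    (haM : ENNReal.ofReal a ≤ M) : a ≤ (min (ENNReal.ofReal (γ * x)) M).toReal := by
  rcases le_total (ENNReal.ofReal (γ * x)) M with h | h
  · rw [min_eq_left h, ENNReal.toReal_ofReal (by nlinarith)]
    nlinarith
  · rw [min_eq_right h]
    exact (ENNReal.ofReal_le_iff_le_toReal (ne_top_of_le_ne_top ENNReal.ofReal_ne_top h)).1 haM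

theorem sub_sub_inner_le_of_lipschitz_gradient {U : Type*} [NormedAddCommGroup U]
    [InnerProductSpace ℝ U] [CompleteSpace U] {F : U → ℝ} {gradF : U → U}
    (hF : ∀ u, HasGradientAt F (gradF u) u) {L : ℝ} (hL : 0 ≤ L)
    (hlip : ∀ u w, ‖gradF u - gradF w‖ ≤ L * ‖u - w‖) (v p : U) :
    F p - F v - ⟪gradF v, p - v⟫ ≤ L * ‖p - v‖ ^ 2 := by
  have hbound : ∀ u ∈ segment ℝ v p, ‖InnerProductSpace.toDual ℝ U (gradF u) -
      InnerProductSpace.toDual ℝ U (gradF v)‖ ≤ L * ‖p - v‖ := by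
    intro u hu
    rw [← map_sub, LinearIsometryEquiv.norm_map]
    exact (hlip u v).trans (mul_le_mul_of_nonneg_left (norm_sub_le_of_mem_segment hu) hL)
  have hmvt := (convex_segment v p).norm_image_sub_le_of_norm_hasFDerivWithin_le'
    (fun u _ => (hF u).hasFDerivAt.hasFDerivWithinAt) hbound (left_mem_segment ℝ v p)
    (right_mem_segment ℝ v p)
  rw [InnerProductSpace.toDual_apply_apply] at hmvt
  calc F p - F v - ⟪gradF v, p - v⟫ ≤ ‖F p - F v - ⟪gradF v, p - v⟫‖ := le_abs_self _
    _ ≤ L * ‖p - v‖ * ‖p - v‖ := hmvt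
    _ = L * ‖p - v‖ ^ 2 := by ring

def ERealConvex {U : Type*} [AddCommGroup U] [Module ℝ U] (G : U → EReal) : Prop :=
  ∀ v w : U, ∀ t : ℝ, 0 ≤ t → t ≤ 1 →
    G (t • v + (1 - t) • w) ≤ (t : EReal) * G v + ((1 - t : ℝ) : EReal) * G w

theorem ERealConvex.le_coe {U : Type*} [AddCommGroup U] [Module ℝ U] {G : U → EReal}
    (hconv : ERealConvex G) (hGbot : ∀ u, G u ≠ ⊥) {v w : U} (hv : G v ≠ ⊤) (hw : G w ≠ ⊤)
    {t : ℝ} (ht0 : 0 ≤ t) (ht1 : t ≤ 1) :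
    G (t • v + (1 - t) • w) ≤ ((t * (G v).toReal + (1 - t) * (G w).toReal : ℝ) : EReal) := by
  have h := hconv v w t ht0 ht1
  rwa [← EReal.coe_toReal hv (hGbot v), ← EReal.coe_toReal hw (hGbot w), ← EReal.coe_mul,
    ← EReal.coe_mul, ← EReal.coe_add] at h

section Prox

variable {U : Type*} [NormedAddCommGroup U]

def IsProxMap (G : U → EReal) (prox : ℝ → U → U) : Prop :=
  ∀ r : ℝ, 0 < r → ∀ v w : U,
    G (prox r v) + ((‖prox r v - v‖ ^ 2 / (2 * r) : ℝ) : EReal) ≤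
      G w + ((‖w - v‖ ^ 2 / (2 * r) : ℝ) : EReal)

variable {G : U → EReal} {prox : ℝ → U → U} {s : ℝ}

namespace IsProxMap

theorem ne_top (hprox : IsProxMap G prox) (hs : 0 < s) (z : U) {w : U} (hw : G w ≠ ⊤) :
    G (prox s z) ≠ ⊤ := by
  intro htop
  have h := hprox s hs z w
  rw [htop, EReal.top_add_coe, top_le_iff] at h
  exact EReal.add_ne_top hw (EReal.coe_ne_top _) h

theorem toReal_add_le (hprox : IsProxMap G prox) (hGbot : ∀ u, G u ≠ ⊥) (hs : 0 < s) (z : U)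
    {w : U} (hw : G w ≠ ⊤) :
    (G (prox s z)).toReal + ‖prox s z - z‖ ^ 2 / (2 * s) ≤
      (G w).toReal + ‖w - z‖ ^ 2 / (2 * s) := by
  have h := hprox s hs z w
  rwa [← EReal.coe_toReal (hprox.ne_top hs z hw) (hGbot _), ← EReal.coe_toReal hw (hGbot _),
    ← EReal.coe_add, ← EReal.coe_add, EReal.coe_le_coe_iff] at h

variable [InnerProductSpace ℝ U]

theorem inner_sub_le (hprox : IsProxMap G prox) (hGbot : ∀ u, G u ≠ ⊥)
    (hconv : ERealConvex G) (hs : 0 < s) (z : U) {w : U} (hw : G w ≠ ⊤) :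
    ⟪z - prox s z, w - prox s z⟫ ≤ s * ((G w).toReal - (G (prox s z)).toReal) := by
  set p := prox s z
  have hp : G p ≠ ⊤ := hprox.ne_top hs z hw
  -- compare `p` with `t • w + (1 - t) • p` and let `t → 0`
  refine le_of_forall_le_add_mul (c := ‖w - p‖ ^ 2 / 2) fun t ht0 ht1 => ?_
  have hGt := hconv.le_coe hGbot hw hp ht0.le ht1
  have hmin := hprox.toReal_add_le hGbot hs z (ne_top_of_le_ne_top (EReal.coe_ne_top _) hGt)
  have hGt' := EReal.toReal_le_toReal hGt (hGbot _) (EReal.coe_ne_top _)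
  rw [EReal.toReal_coe] at hGt'
  have hexp : t • w + (1 - t) • p - z = (p - z) + t • (w - p) := by module
  rw [hexp, norm_add_sq_real, inner_smul_right, norm_smul, Real.norm_eq_abs, abs_of_pos ht0,
    mul_pow] at hmin
  rw [← neg_sub p z, inner_neg_left]
  have key : t * -⟪p - z, w - p⟫ ≤
      t * (s * ((G w).toReal - (G p).toReal) + t * (‖w - p‖ ^ 2 / 2)) := by
    field_simp at hmin
    nlinarith
  exact le_of_mul_le_mul_left key ht0

end IsProxMap

end Prox

section ProxGrad

variable {U : Type*} [NormedAddCommGroup U] [InnerProductSpace ℝ U] {G : U → EReal}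
  {prox : ℝ → U → U} {gradF : U → U}

theorem IsProxMap.stationary_of_eq (hprox : IsProxMap G prox) (hGbot : ∀ u, G u ≠ ⊥)
    (hconv : ERealConvex G) {r : ℝ} (hr : 0 < r) {x g : U} (hx : prox r (x - r • g) = x)
    (w : U) : G x + ((⟪-g, w - x⟫ : ℝ) : EReal) ≤ G w := by
  by_cases hw : G w = ⊤
  · rw [hw]; exact le_top
  have hxdom : G x ≠ ⊤ := hx ▸ hprox.ne_top hr _ hw
  have hvi := hprox.inner_sub_le hGbot hconv hr (x - r • g) hw
  rw [hx, sub_sub_cancel_left, inner_neg_left, real_inner_smul_left] at hvi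
  have hineq : ⟪-g, w - x⟫ ≤ (G w).toReal - (G x).toReal := by
    rw [inner_neg_left]
    nlinarith
  rw [← EReal.coe_toReal hxdom (hGbot x), ← EReal.coe_toReal hw (hGbot w), ← EReal.coe_add,
    EReal.coe_le_coe_iff]
  linarith

theorem norm_sub_proxGradOracle_sq_le (hprox : IsProxMap G prox) (hGbot : ∀ u, G u ≠ ⊥)
    (hconv : ERealConvex G) {Δ : ℝ} (hΔ : 0 < Δ) {v : U} (hv : G v ≠ ⊤) :
    ‖v - proxGradOracle prox gradF Δ v‖ ^ 2 ≤ 2 * Δ * proxGradPred prox G gradF Δ v := by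
  have hvi := hprox.inner_sub_le hGbot hconv hΔ (v - Δ • gradF v) hv
  set p := proxGradOracle prox gradF Δ v
  change ⟪v - Δ • gradF v - p, v - p⟫ ≤ Δ * ((G v).toReal - (G p).toReal) at hvi
  rw [sub_right_comm, inner_sub_left, real_inner_self_eq_norm_sq, real_inner_smul_left] at hvi
  rw [proxGradPred, ← norm_neg (p - v), neg_sub]
  field_simp
  nlinarith

theorem le_proxGradPred (hprox : IsProxMap G prox) (hGbot : ∀ u, G u ≠ ⊥) {Δ : ℝ} (hΔ : 0 < Δ)
    (v : U) {w : U} (hw : G w ≠ ⊤) :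
    ⟪gradF v, v - w⟫ + (G v).toReal - (G w).toReal - 1 / (2 * Δ) * ‖w - v‖ ^ 2 ≤
      proxGradPred prox G gradF Δ v := by
  set p := proxGradOracle prox gradF Δ v
  have hmin : (G p).toReal + ‖p - (v - Δ • gradF v)‖ ^ 2 / (2 * Δ) ≤
      (G w).toReal + ‖w - (v - Δ • gradF v)‖ ^ 2 / (2 * Δ) :=
    hprox.toReal_add_le hGbot hΔ _ hw
  have hexp : ∀ x : U, ‖x - (v - Δ • gradF v)‖ ^ 2 =
      ‖x - v‖ ^ 2 + 2 * Δ * ⟪gradF v, x - v⟫ + Δ ^ 2 * ‖gradF v‖ ^ 2 := by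
    intro x
    rw [sub_sub_eq_add_sub, add_sub_right_comm, norm_add_sq_real, inner_smul_right, norm_smul,
      Real.norm_eq_abs, abs_of_pos hΔ, real_inner_comm]
    ring
  rw [hexp, hexp] at hmin
  rw [proxGradPred, ← neg_sub w v, ← neg_sub p v, inner_neg_right, inner_neg_right]
  field_simp at hmin ⊢
  nlinarith

theorem proxGradPred_mono (hprox : IsProxMap G prox) (hGbot : ∀ u, G u ≠ ⊥) {t Δ : ℝ}
    (ht : 0 < t) (htΔ : t ≤ Δ) {v : U} (hv : G v ≠ ⊤) :
    proxGradPred prox G gradF t v ≤ proxGradPred prox G gradF Δ v := by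
  refine le_trans ?_ (le_proxGradPred hprox hGbot (ht.trans_le htΔ) v
    (w := proxGradOracle prox gradF t v) (hprox.ne_top ht _ hv))
  rw [proxGradPred]
  gcongr

theorem mul_norm_sub_proxGradOracle_le (hprox : IsProxMap G prox) (hGbot : ∀ u, G u ≠ ⊥)
    (hconv : ERealConvex G) {s s' : ℝ} (hs : 0 < s) (hss' : s ≤ s') {v : U} (hv : G v ≠ ⊤) :
    s * ‖v - proxGradOracle prox gradF s' v‖ ≤ s' * ‖v - proxGradOracle prox gradF s v‖ := by
  have hs' : 0 < s' := hs.trans_le hss'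
  set p := proxGradOracle prox gradF s v
  set q := proxGradOracle prox gradF s' v
  have h1 : ⟪v - s • gradF v - p, q - p⟫ ≤ s * ((G q).toReal - (G p).toReal) :=
    hprox.inner_sub_le hGbot hconv hs _ (hprox.ne_top hs' _ hv)
  have h2 : ⟪v - s' • gradF v - q, p - q⟫ ≤ s' * ((G p).toReal - (G q).toReal) :=
    hprox.inner_sub_le hGbot hconv hs' _ (hprox.ne_top hs _ hv)
  rw [sub_right_comm, show q - p = (v - p) - (v - q) by abel] at h1
  rw [sub_right_comm, show p - q = (v - q) - (v - p) by abel] at h2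
  set a := v - p
  set b := v - q
  clear_value a b
  rw [inner_sub_left, real_inner_smul_left, inner_sub_right, real_inner_self_eq_norm_sq]
    at h1 h2
  rw [real_inner_comm a b, ← neg_sub a b, inner_neg_right] at h2
  -- the two variational inequalities, scaled by `s'` and `s`, add up to an inequality free of
  -- `G` and `∇F`; Cauchy–Schwarz finishes it
  have hab := real_inner_le_norm a b
  have key : s' * ‖a‖ ^ 2 + s * ‖b‖ ^ 2 ≤ (s + s') * (‖a‖ * ‖b‖) := by
    nlinarith [mul_le_mul_of_nonneg_left h1 hs'.le, mul_le_mul_of_nonneg_left h2 hs.le]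
  by_contra! hcon
  have hab' : ‖a‖ < ‖b‖ :=
    lt_of_mul_lt_mul_left ((mul_le_mul_of_nonneg_right hss' (norm_nonneg a)).trans_lt hcon) hs.le
  nlinarith [mul_pos (sub_pos.2 hcon) (sub_pos.2 hab')]

end ProxGrad

section TrustRegion

variable {U : Type*} [NormedAddCommGroup U] [InnerProductSpace ℝ U] {G : U → EReal}
  {prox : ℝ → U → U} {F : U → ℝ} {gradF : U → U} {η γ₁ γ₂ : ℝ} {Δmax : ℝ≥0∞} {v : ℕ → U}
  {Δ : ℕ → ℝ}

def IsSuccessfulStep (prox : ℝ → U → U) (F : U → ℝ) (G : U → EReal) (gradF : U → U)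
    (η Δ : ℝ) (v : U) : Prop :=
  η * proxGradPred prox G gradF Δ v ≤ proxGradAred prox F G gradF Δ v

def IsTrustRegionStep (prox : ℝ → U → U) (F : U → ℝ) (G : U → EReal) (gradF : U → U)
    (η γ₁ γ₂ : ℝ) (Δmax : ℝ≥0∞) (v : ℕ → U) (Δ : ℕ → ℝ) (n : ℕ) : Prop :=
  (IsSuccessfulStep prox F G gradF η (Δ n) (v n) →
      v (n + 1) = proxGradOracle prox gradF (Δ n) (v n) ∧
        Δ (n + 1) = (min (ENNReal.ofReal (γ₂ * Δ n)) Δmax).toReal) ∧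
    (¬ IsSuccessfulStep prox F G gradF η (Δ n) (v n) →
      v (n + 1) = v n ∧ Δ (n + 1) = γ₁ * Δ n)

theorem isSuccessfulStep_of_mul_le [CompleteSpace U] (hprox : IsProxMap G prox)
    (hGbot : ∀ u, G u ≠ ⊥) (hconv : ERealConvex G) (hF : ∀ u, HasGradientAt F (gradF u) u)
    {L : ℝ} (hL : 0 ≤ L) (hlip : ∀ u w, ‖gradF u - gradF w‖ ≤ L * ‖u - w‖) (hη : η ≤ 1)
    {Δ : ℝ} (hΔ : 0 < Δ) (hΔL : 2 * L * Δ ≤ 1) {x : U} (hx : G x ≠ ⊤) :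
    IsSuccessfulStep prox F G gradF η Δ x := by
  have hpred := norm_sub_proxGradOracle_sq_le (gradF := gradF) hprox hGbot hconv hΔ hx
  set p := proxGradOracle prox gradF Δ x
  have hdesc := sub_sub_inner_le_of_lipschitz_gradient hF hL hlip x p
  have hared : proxGradAred prox F G gradF Δ x = proxGradPred prox G gradF Δ x +
      1 / (2 * Δ) * ‖p - x‖ ^ 2 - (F p - F x - ⟪gradF x, p - x⟫) := by
    rw [proxGradAred, proxGradPred, ← neg_sub p x, inner_neg_right]
    ring
  have hquad : L * ‖p - x‖ ^ 2 ≤ 1 / (2 * Δ) * ‖p - x‖ ^ 2 := by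
    gcongr
    rw [le_div_iff₀ (by positivity)]
    linarith
  have hpred0 : 0 ≤ proxGradPred prox G gradF Δ x :=
    nonneg_of_mul_nonneg_right ((sq_nonneg _).trans hpred) (by positivity)
  rw [IsSuccessfulStep, hared]
  nlinarith

theorem trustRegion_ne_top_and_le_radius
    (hstep : ∀ n, IsTrustRegionStep prox F G gradF η γ₁ γ₂ Δmax v Δ n)
    (hprox : IsProxMap G prox) (hv₀ : G (v 0) ≠ ⊤) (hΔ₀ : 0 < Δ 0)
    (hΔ₀max : ENNReal.ofReal (Δ 0) < Δmax) (hγ₁ : 0 < γ₁) (hγ₂ : 1 ≤ γ₂) {Δlo : ℝ}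
    (hΔlo : 0 < Δlo)
    (hsucc : ∀ n, G (v n) ≠ ⊤ → 0 < Δ n → Δ n ≤ Δlo →
      IsSuccessfulStep prox F G gradF η (Δ n) (v n)) (n : ℕ) :
    G (v n) ≠ ⊤ ∧ min (Δ 0) (γ₁ * Δlo) ≤ Δ n := by
  have hδ : 0 < min (Δ 0) (γ₁ * Δlo) := lt_min hΔ₀ (mul_pos hγ₁ hΔlo)
  induction n with
  | zero => exact ⟨hv₀, min_le_left _ _⟩
  | succ n ih =>
    obtain ⟨hdom, hle⟩ := ih
    have hpos : 0 < Δ n := hδ.trans_le hle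
    by_cases hS : IsSuccessfulStep prox F G gradF η (Δ n) (v n)
    · obtain ⟨hv, hΔ⟩ := (hstep n).1 hS
      rw [hv, hΔ]
      exact ⟨hprox.ne_top hpos _ hdom, le_toReal_min_ofReal hδ.le hle hγ₂
        ((ENNReal.ofReal_le_ofReal (min_le_left _ _)).trans hΔ₀max.le)⟩
    · obtain ⟨hv, hΔ⟩ := (hstep n).2 hS
      have hbig : Δlo < Δ n := lt_of_not_ge fun h => hS (hsucc n hdom hpos h)
      rw [hv, hΔ]
      exact ⟨hdom, (min_le_right _ _).trans (by gcongr)⟩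

theorem tendsto_proxGradPred_successful
    (hstep : ∀ n, IsTrustRegionStep prox F G gradF η γ₁ γ₂ Δmax v Δ n)
    (hprox : IsProxMap G prox) (hGbot : ∀ u, G u ≠ ⊥) (hconv : ERealConvex G) (hη : 0 < η)
    (hbdd : ∃ B : ℝ, ∀ u : U, (B : EReal) ≤ (F u : EReal) + G u) (hdom : ∀ n, G (v n) ≠ ⊤)
    (hΔ : ∀ n, 0 < Δ n) :
    Tendsto (fun n => proxGradPred prox G gradF (Δ n) (v n))
      (atTop ⊓ 𝓟 {n | IsSuccessfulStep prox F G gradF η (Δ n) (v n)}) (𝓝 0) := by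
  obtain ⟨B, hB⟩ := hbdd
  set S := {n | IsSuccessfulStep prox F G gradF η (Δ n) (v n)}
  set pred := fun n => proxGradPred prox G gradF (Δ n) (v n)
  set Φ : ℕ → ℝ := fun n => F (v n) + (G (v n)).toReal
  have hpred0 : ∀ n, 0 ≤ pred n := fun n => nonneg_of_mul_nonneg_right
    ((sq_nonneg _).trans (norm_sub_proxGradOracle_sq_le hprox hGbot hconv (hΔ n) (hdom n)))
    (by linarith [hΔ n])
  have hΦ : ∀ n, Φ (n + 1) + S.indicator (fun n => η * pred n) n ≤ Φ n := by
    intro n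
    by_cases hS : n ∈ S
    · rw [Set.indicator_of_mem hS]
      have hared : proxGradAred prox F G gradF (Δ n) (v n) = Φ n - Φ (n + 1) := by
        simp only [Φ, ((hstep n).1 hS).1, proxGradAred]
      linarith [show η * pred n ≤ proxGradAred prox F G gradF (Δ n) (v n) from hS]
    · simp only [Set.indicator_of_notMem hS, add_zero, Φ, ((hstep n).2 hS).1, le_refl]
  have hΦB : ∀ n, B ≤ Φ n := fun n => by
    have h := hB (v n)
    rwa [← EReal.coe_toReal (hdom n) (hGbot _), ← EReal.coe_add, EReal.coe_le_coe_iff] at h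
  have hdecr := tendsto_zero_of_add_le_of_forall_le
    (Set.indicator_nonneg fun n _ => mul_nonneg hη.le (hpred0 n)) hΦ hΦB
  have hηpred : Tendsto (fun n => η * pred n) (atTop ⊓ 𝓟 S) (𝓝 0) :=
    (hdecr.mono_left inf_le_left).congr'
      (eventually_inf_principal.2 (Eventually.of_forall fun n hn => Set.indicator_of_mem hn _))
  simpa [hη.ne'] using hηpred.const_mul η⁻¹

theorem norm_sub_proxGradOracle_le_sqrt (hprox : IsProxMap G prox) (hGbot : ∀ u, G u ≠ ⊥)
    (hconv : ERealConvex G) {t Δ' s : ℝ} (ht : 0 < t) (htΔ : t ≤ Δ') (hts : t ≤ s) {x : U}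
    (hx : G x ≠ ⊤) :
    ‖x - proxGradOracle prox gradF s x‖ ≤ s / t * √(2 * t * proxGradPred prox G gradF Δ' x) := by
  have hratio := mul_norm_sub_proxGradOracle_le (gradF := gradF) hprox hGbot hconv ht hts hx
  have hsqrt : ‖x - proxGradOracle prox gradF t x‖ ≤ √(2 * t * proxGradPred prox G gradF Δ' x) :=
    Real.le_sqrt_of_sq_le <| (norm_sub_proxGradOracle_sq_le hprox hGbot hconv ht hx).trans <| by
      gcongr
      exact proxGradPred_mono hprox hGbot ht htΔ hx
  rw [div_mul_eq_mul_div, le_div_iff₀ ht]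
  nlinarith [mul_le_mul_of_nonneg_left hsqrt (ht.le.trans hts)]

theorem tendsto_norm_sub_proxGradOracle [CompleteSpace U] (hprox : IsProxMap G prox)
    (hGbot : ∀ u, G u ≠ ⊥) (hconv : ERealConvex G) (hF : ∀ u, HasGradientAt F (gradF u) u)
    {L : ℝ} (hlip : ∀ u w, ‖gradF u - gradF w‖ ≤ L * ‖u - w‖)
    (hbdd : ∃ B : ℝ, ∀ u : U, (B : EReal) ≤ (F u : EReal) + G u) (hη0 : 0 < η) (hη1 : η ≤ 1)
    (hγ₁0 : 0 < γ₁) (hγ₁1 : γ₁ < 1) (hγ₂ : 1 ≤ γ₂) (hv₀ : G (v 0) ≠ ⊤) (hΔ₀ : 0 < Δ 0)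
    (hΔ₀max : ENNReal.ofReal (Δ 0) < Δmax)
    (hstep : ∀ n, IsTrustRegionStep prox F G gradF η γ₁ γ₂ Δmax v Δ n) {s : ℝ} (hs : 0 < s) :
    Tendsto (fun n => ‖v n - proxGradOracle prox gradF s (v n)‖) atTop (𝓝 0) := by
  set L' := max L 0
  have hlip' : ∀ u w, ‖gradF u - gradF w‖ ≤ L' * ‖u - w‖ := fun u w =>
    (hlip u w).trans (by gcongr; exact le_max_left _ _)
  have hΔlo : 0 < 1 / (2 * L' + 1) := by positivity
  have hinv := trustRegion_ne_top_and_le_radius hstep hprox hv₀ hΔ₀ hΔ₀max hγ₁0 hγ₂ hΔlo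
    fun n hdom hpos hle => isSuccessfulStep_of_mul_le hprox hGbot hconv hF (le_max_right _ _)
      hlip' hη1 hpos (by rw [le_div_iff₀ (by positivity)] at hle; nlinarith) hdom
  set δ := min (Δ 0) (γ₁ * (1 / (2 * L' + 1)))
  have hδ : 0 < δ := lt_min hΔ₀ (mul_pos hγ₁0 hΔlo)
  have hfreq := frequently_of_forall_le_of_eq_mul hγ₁0.le hγ₁1 hδ (fun n => (hinv n).2)
    fun n hn => ((hstep n).2 hn).2
  have hpred := tendsto_proxGradPred_successful hstep hprox hGbot hconv hη0 hbdd
    (fun n => (hinv n).1) fun n => hδ.trans_le (hinv n).2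
  choose m hnm hmS hmv using exists_ge_and_eq_of_frequently hfreq fun n hn => ((hstep n).2 hn).1
  have hm : Tendsto m atTop (atTop ⊓ 𝓟 {n | IsSuccessfulStep prox F G gradF η (Δ n) (v n)}) :=
    tendsto_inf.2 ⟨tendsto_atTop_mono hnm tendsto_id, tendsto_principal.2 (.of_forall hmS)⟩
  set t := min δ s
  have ht : 0 < t := lt_min hδ hs
  have hbound : ∀ n, ‖v n - proxGradOracle prox gradF s (v n)‖ ≤
      s / t * √(2 * t * proxGradPred prox G gradF (Δ (m n)) (v (m n))) := fun n => by
    rw [← hmv n]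
    exact norm_sub_proxGradOracle_le_sqrt hprox hGbot hconv ht
      ((min_le_left _ _).trans (hinv (m n)).2) (min_le_right _ _) (hinv (m n)).1
  refine squeeze_zero (fun n => norm_nonneg _) hbound ?_
  simpa using ((hpred.comp hm).const_mul (2 * t)).sqrt.const_mul (s / t)

end TrustRegion

theorem prox_grad_trust_region_convergence_general
    {U : Type*} [NormedAddCommGroup U] [InnerProductSpace ℝ U] [CompleteSpace U]
    (G : U → EReal)
    -- `G` is proper
    (hGbot : ∀ v : U, G v ≠ ⊥)
    -- `G` is convex
    (hGconv : ∀ v w : U, ∀ t : ℝ, 0 ≤ t → t ≤ 1 →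
      G (t • v + (1 - t) • w) ≤ (t : EReal) * G v + ((1 - t : ℝ) : EReal) * G w)
    -- `F` is Fréchet differentiable with gradient `gradF`
    (F : U → ℝ) (gradF : U → U) (hF : ∀ v : U, HasGradientAt F (gradF v) v)
    -- `∇F` is Lipschitz with constant `LgradF`
    (LgradF : ℝ) (hgradlip : ∀ v w : U, ‖gradF v - gradF w‖ ≤ LgradF * ‖v - w‖)
    -- `F + G` is bounded from below
    (hbdd : ∃ B : ℝ, ∀ v : U, (B : EReal) ≤ (F v : EReal) + G v)
    -- `prox r v` is the (unique) minimizer of `w ↦ G w + ‖w - v‖² / (2 r)`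
    (prox : ℝ → U → U)
    (hprox : ∀ r : ℝ, 0 < r → ∀ v w : U,
      G (prox r v) + ((‖prox r v - v‖ ^ 2 / (2 * r) : ℝ) : EReal) ≤
        G w + ((‖w - v‖ ^ 2 / (2 * r) : ℝ) : EReal))
    -- fixed parameter of the criticality measure
    (r : ℝ) (hr : 0 < r)
    -- algorithmic parameters
    (η γ₁ γ₂ : ℝ) (hη0 : 0 < η) (hη1 : η < 1)
    (hγ₁0 : 0 < γ₁) (hγ₁1 : γ₁ < 1) (hγ₂ : 1 ≤ γ₂)
    (Δmax : ℝ≥0∞)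
    -- the iterates of the trust-region method
    (v : ℕ → U) (Δ : ℕ → ℝ)
    (hv₀ : G (v 0) ≠ ⊤) (hΔ₀pos : 0 < Δ 0) (hΔ₀lt : ENNReal.ofReal (Δ 0) < Δmax)
    (hstep : ∀ n : ℕ,
      0 < 1 / (2 * r ^ 2) * ‖v n - prox r (v n - r • gradF (v n))‖ ^ 2 →
      ((η * proxGradPred prox G gradF (Δ n) (v n) ≤
            proxGradAred prox F G gradF (Δ n) (v n) →
          v (n + 1) = proxGradOracle prox gradF (Δ n) (v n) ∧
          Δ (n + 1) = (min (ENNReal.ofReal (γ₂ * Δ n)) Δmax).toReal) ∧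
        (¬ (η * proxGradPred prox G gradF (Δ n) (v n) ≤
            proxGradAred prox F G gradF (Δ n) (v n)) →
          v (n + 1) = v n ∧ Δ (n + 1) = γ₁ * Δ n))) :
    -- termination at a stationary point, or vanishing residual for all `r̂ > 0`
    (∃ n : ℕ, ∀ w : U,
        G (v n) + ((⟪-gradF (v n), w - v n⟫ : ℝ) : EReal) ≤ G w) ∨
      (∀ rhat : ℝ, 0 < rhat →
        Tendsto (fun n : ℕ => ‖v n - prox rhat (v n - rhat • gradF (v n))‖)
          atTop (𝓝 0)) := by
  by_cases hterm : ∀ n, 0 < 1 / (2 * r ^ 2) * ‖v n - prox r (v n - r • gradF (v n))‖ ^ 2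
  · exact Or.inr fun rhat hrhat => tendsto_norm_sub_proxGradOracle hprox hGbot hGconv hF
      hgradlip hbdd hη0 hη1.le hγ₁0 hγ₁1 hγ₂ hv₀ hΔ₀pos hΔ₀lt (fun n => hstep n (hterm n)) hrhat
  · obtain ⟨n, hn⟩ := not_forall.1 hterm
    rw [mul_pos_iff_of_pos_left (by positivity), sq_pos_iff, norm_ne_zero_iff, not_not,
      sub_eq_zero] at hn
    exact Or.inl ⟨n, IsProxMap.stationary_of_eq hprox hGbot hGconv hr hn.symm⟩

/-- Theorem 3.12 / `thm:OC_conv_convergence`: the trust-region method with the proximal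
gradient oracle either terminates at a stationary point or the proximal gradient residual
tends to zero for every step length `r̂ > 0`. -/
theorem prox_grad_trust_region_convergence
    {U : Type*} [NormedAddCommGroup U] [InnerProductSpace ℝ U] [CompleteSpace U]
    (G : U → EReal)
    -- `G` is proper
    (hGbot : ∀ v : U, G v ≠ ⊥) (hGtop : ∃ v : U, G v ≠ ⊤)
    -- `G` is convex
    (hGconv : ∀ v w : U, ∀ t : ℝ, 0 ≤ t → t ≤ 1 →
      G (t • v + (1 - t) • w) ≤ (t : EReal) * G v + ((1 - t : ℝ) : EReal) * G w)
    -- `G` is lower semicontinuous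
    (hGlsc : LowerSemicontinuous G)
    -- `G` is Lipschitz on its domain with constant `L_G`
    (L_G : ℝ)
    (hGlip : ∀ v : U, G v ≠ ⊤ → ∀ w : U, G w ≠ ⊤ →
      |(G v).toReal - (G w).toReal| ≤ L_G * ‖v - w‖)
    -- `F` is Fréchet differentiable with gradient `gradF`
    (F : U → ℝ) (gradF : U → U) (hF : ∀ v : U, HasGradientAt F (gradF v) v)
    -- `∇F` is Lipschitz with constant `LgradF`
    (LgradF : ℝ) (hgradlip : ∀ v w : U, ‖gradF v - gradF w‖ ≤ LgradF * ‖v - w‖)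
    -- `F` is Lipschitz on the domain of `G` with constant `L_F`
    (L_F : ℝ)
    (hFlip : ∀ v : U, G v ≠ ⊤ → ∀ w : U, G w ≠ ⊤ → |F v - F w| ≤ L_F * ‖v - w‖)
    -- `F + G` is bounded from below
    (hbdd : ∃ B : ℝ, ∀ v : U, (B : EReal) ≤ (F v : EReal) + G v)
    -- `prox r v` is the (unique) minimizer of `w ↦ G w + ‖w - v‖² / (2 r)`
    (prox : ℝ → U → U)
    (hprox : ∀ r : ℝ, 0 < r → ∀ v w : U,
      G (prox r v) + ((‖prox r v - v‖ ^ 2 / (2 * r) : ℝ) : EReal) ≤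
        G w + ((‖w - v‖ ^ 2 / (2 * r) : ℝ) : EReal))
    -- fixed parameter of the criticality measure
    (r : ℝ) (hr : 0 < r)
    -- algorithmic parameters
    (η γ₁ γ₂ : ℝ) (hη0 : 0 < η) (hη1 : η < 1)
    (hγ₁0 : 0 < γ₁) (hγ₁1 : γ₁ < 1) (hγ₂ : 1 ≤ γ₂)
    (Δmax : ℝ≥0∞) (hΔmax : 0 < Δmax)
    -- the iterates of the trust-region method
    (v : ℕ → U) (Δ : ℕ → ℝ)
    (hv₀ : G (v 0) ≠ ⊤) (hΔ₀pos : 0 < Δ 0) (hΔ₀lt : ENNReal.ofReal (Δ 0) < Δmax)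
    (hstep : ∀ n : ℕ,
      0 < 1 / (2 * r ^ 2) * ‖v n - prox r (v n - r • gradF (v n))‖ ^ 2 →
      ((η * proxGradPred prox G gradF (Δ n) (v n) ≤
            proxGradAred prox F G gradF (Δ n) (v n) →
          v (n + 1) = proxGradOracle prox gradF (Δ n) (v n) ∧
          Δ (n + 1) = (min (ENNReal.ofReal (γ₂ * Δ n)) Δmax).toReal) ∧
        (¬ (η * proxGradPred prox G gradF (Δ n) (v n) ≤
            proxGradAred prox F G gradF (Δ n) (v n)) →
          v (n + 1) = v n ∧ Δ (n + 1) = γ₁ * Δ n))) :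
    -- termination at a stationary point, or vanishing residual for all `r̂ > 0`
    (∃ n : ℕ, ∀ w : U,
        G (v n) + ((⟪-gradF (v n), w - v n⟫ : ℝ) : EReal) ≤ G w) ∨
      (∀ rhat : ℝ, 0 < rhat →
        Tendsto (fun n : ℕ => ‖v n - prox rhat (v n - rhat • gradF (v n))‖)
          atTop (𝓝 0)) :=
  prox_grad_trust_region_convergence_general G hGbot hGconv F gradF hF LgradF hgradlip hbdd prox
    hprox r hr η γ₁ γ₂ hη0 hη1 hγ₁0 hγ₁1 hγ₂ Δmax v Δ hv₀ hΔ₀pos hΔ₀lt hstep
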